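/- arXiv:1901.04337 — 3 statements merged into one kernel-verified Lean document; each statement's English description precedes it below -/
import Mathlib

section
/- If u(x,t) = -cC₀/(ab - e^{-cC₀((x-t)+C₁)}) and v(x,t) = cC₀/(a(ab·e^{cC₀((x-t)+C₁)} - 1)), where a, b, C₀, C₁ are real constants with a ≠ 0, c = 1, and the denominators are nonzero, then u and v satisfy the Cheng system u_x = -a·u·v and v_t = b·u_x. -/
/-!
Both fields are functions of the single phase `ξ = (x - t) + C₁`; writing `E = exp (-k ξ)`
with `k = c C₀`, one has `u = -k / (ab - E)` and `v = k E / (a (ab - E))`. Hence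
`u_x = u' = k² E / (ab - E)² = -a u v`, and `v_t = -v' = b k² E / (ab - E)² = b u_x`.
-/

open Real

namespace Cheng

variable (a b k : ℝ)

noncomputable def waveU (ξ : ℝ) : ℝ := -k / (a * b - exp (-k * ξ))

noncomputable def waveV (ξ : ℝ) : ℝ := k / (a * (a * b * exp (k * ξ) - 1))

variable {a b k}

theorem waveV_eq (ξ : ℝ) :
    waveV a b k ξ = k * exp (-k * ξ) / (a * (a * b - exp (-k * ξ))) := by
  have hE : exp (k * ξ) = (exp (-k * ξ))⁻¹ := by rw [← exp_neg, neg_mul, neg_neg]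
  rw [waveV, hE, ← div_eq_mul_inv, div_sub_one (exp_ne_zero _), mul_div_assoc',
    div_div_eq_mul_div]

theorem hasDerivAt_exp_neg_mul (ξ : ℝ) :
    HasDerivAt (fun ξ => exp (-k * ξ)) (-k * exp (-k * ξ)) ξ := by
  simpa [mul_comm] using ((hasDerivAt_id ξ).const_mul (-k)).exp

theorem hasDerivAt_waveU {ξ : ℝ} (h : a * b - exp (-k * ξ) ≠ 0) :
    HasDerivAt (waveU a b k) (k ^ 2 * exp (-k * ξ) / (a * b - exp (-k * ξ)) ^ 2) ξ := by
  refine ((hasDerivAt_const ξ (-k)).div ((hasDerivAt_exp_neg_mul ξ).const_sub (a * b)) h)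
    |>.congr_deriv ?_
  ring

theorem hasDerivAt_waveV {ξ : ℝ} (ha : a ≠ 0) (h : a * b - exp (-k * ξ) ≠ 0) :
    HasDerivAt (waveV a b k) (-b * (k ^ 2 * exp (-k * ξ) / (a * b - exp (-k * ξ)) ^ 2)) ξ := by
  rw [show waveV a b k = _ from funext waveV_eq]
  have hnum := (hasDerivAt_exp_neg_mul (k := k) ξ).const_mul k
  have hden := ((hasDerivAt_exp_neg_mul (k := k) ξ).const_sub (a * b)).const_mul a
  refine (hnum.div hden (mul_ne_zero ha h)).congr_deriv ?_
  field_simp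
  ring

theorem neg_mul_waveU_mul_waveV (ha : a ≠ 0) (ξ : ℝ) :
    -a * waveU a b k ξ * waveV a b k ξ = k ^ 2 * exp (-k * ξ) / (a * b - exp (-k * ξ)) ^ 2 := by
  rw [waveU, waveV_eq]
  field_simp

end Cheng

open Cheng

theorem cheng_explicit_solution_general (a b c C₀ C₁ : ℝ) (ha : a ≠ 0)
    (u v : ℝ → ℝ → ℝ)
    (hu : ∀ x t, u x t = -(c * C₀) / (a * b - Real.exp (-(c * C₀) * ((x - t) + C₁))))
    (hv : ∀ x t, v x t = (c * C₀) / (a * (a * b * Real.exp ((c * C₀) * ((x - t) + C₁)) - 1)))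
    (hden1 : ∀ x t, a * b - Real.exp (-(c * C₀) * ((x - t) + C₁)) ≠ 0) :
    ∀ x t, deriv (fun x' => u x' t) x = -a * u x t * v x t ∧
      deriv (fun t' => v x t') t = b * deriv (fun x' => u x' t) x := by
  obtain rfl : u = fun x t => waveU a b (c * C₀) ((x - t) + C₁) := funext₂ hu
  obtain rfl : v = fun x t => waveV a b (c * C₀) ((x - t) + C₁) := funext₂ hv
  intro x t
  have hux := ((hasDerivAt_waveU (hden1 x t)).comp_add_const (x - t) C₁).comp_sub_const x t
  have hvt := ((hasDerivAt_waveV ha (hden1 x t)).comp_add_const (x - t) C₁).comp_const_sub x t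
  rw [hux.deriv, hvt.deriv]
  exact ⟨(neg_mul_waveU_mul_waveV ha _).symm, by ring⟩

/-- Explicit traveling-wave (c = 1) solution of the Cheng system
`u_x = -a u v`, `v_t = b u_x`. -/
theorem cheng_explicit_solution (a b c C₀ C₁ : ℝ) (ha : a ≠ 0) (hc : c = 1)
    (u v : ℝ → ℝ → ℝ)
    (hu : ∀ x t, u x t = -(c * C₀) / (a * b - Real.exp (-(c * C₀) * ((x - t) + C₁))))
    (hv : ∀ x t, v x t = (c * C₀) / (a * (a * b * Real.exp ((c * C₀) * ((x - t) + C₁)) - 1)))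
    (hden1 : ∀ x t, a * b - Real.exp (-(c * C₀) * ((x - t) + C₁)) ≠ 0)
    (hden2 : ∀ x t, a * (a * b * Real.exp ((c * C₀) * ((x - t) + C₁)) - 1) ≠ 0) :
    ∀ x t, deriv (fun x' => u x' t) x = -a * u x t * v x t ∧
      deriv (fun t' => v x t') t = b * deriv (fun x' => u x' t) x :=
  cheng_explicit_solution_general a b c C₀ C₁ ha u v hu hv hden1
end

section
/- Let w, k : ℝ → ℝ be differentiable satisfying f·w'(f) + w(f) = a·k(f)·w(f) and k'(f) = -b·(f·w'(f) + w(f)). If w is twice differentiable, then w satisfies f·w·w'' + a·b·w³ + w·w' + a·b·f·w²·w' - f·(w')² = 0. -/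
/-!
Since `f w' + w = a k w` holds identically, the derivatives of both sides agree:
`f w'' + 2 w' = a k' w + a k w'`. Multiplying by `w`, the term `a k w` becomes `f w' + w` again
and `k'` is `-b (f w' + w)`, so `k` disappears.
-/

section

variable {𝕜 : Type*} [NontriviallyNormedField 𝕜] {w k : 𝕜 → 𝕜} {x : 𝕜}

theorem hasDerivAt_mul_deriv_add (hw : DifferentiableAt 𝕜 w x)
    (hw2 : DifferentiableAt 𝕜 (deriv w) x) :
    HasDerivAt (fun y => y * deriv w y + w y) (x * deriv (deriv w) x + 2 * deriv w x) x :=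
  (((hasDerivAt_id' x).mul hw2.hasDerivAt).add hw.hasDerivAt).congr_deriv (by ring)

theorem mul_deriv_deriv_add_two_mul_deriv_eq {a : 𝕜} (hw : DifferentiableAt 𝕜 w x)
    (hk : DifferentiableAt 𝕜 k x) (hw2 : DifferentiableAt 𝕜 (deriv w) x)
    (hode : ∀ y, y * deriv w y + w y = a * k y * w y) :
    x * deriv (deriv w) x + 2 * deriv w x = a * deriv k x * w x + a * k x * deriv w x := by
  have hlhs := hasDerivAt_mul_deriv_add hw hw2
  rw [funext hode] at hlhs
  exact hlhs.unique ((hk.hasDerivAt.const_mul a).mul hw.hasDerivAt)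

end

/-- Eliminating `k` from `f w' + w = a k w`, `k' = -b (f w' + w)` yields
`f w w'' + a b w³ + w w' + a b f w² w' - f (w')² = 0`. -/
theorem cheng_scaling_secondOrder (a b : ℝ)
    (w k : ℝ → ℝ) (hw : Differentiable ℝ w) (hk : Differentiable ℝ k)
    (hw2 : Differentiable ℝ (deriv w))
    (hode1 : ∀ f, f * deriv w f + w f = a * k f * w f)
    (hode2 : ∀ f, deriv k f = -b * (f * deriv w f + w f)) :
    ∀ f, f * w f * deriv (deriv w) f + a * b * (w f) ^ 3 + w f * deriv w f
      + a * b * f * (w f) ^ 2 * deriv w f - f * (deriv w f) ^ 2 = 0 := by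
  intro f
  have hdiff := mul_deriv_deriv_add_two_mul_deriv_eq (hw f) (hk f) (hw2 f) hode1
  rw [hode2 f] at hdiff
  linear_combination w f * hdiff - deriv w f * hode1 f
end

section
/- Let w : (0,∞) → ℝ be twice differentiable, nowhere zero, satisfying f·w·w'' + a·b·w³ + w·w' + a·b·f·w²·w' - f·(w')² = 0. Define r(f) = f·w(f) and v(f) = f²·w'(f). Then wherever r'(f) ≠ 0, the function v viewed as a function of r satisfies dv/dr = -a·b·r + v/r (for r ≠ 0). -/
/-!
The whole computation rests on one polynomial identity: with `r = f w` and `v = f² w'`,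
`r v' - v r' + ab r² r' = f² · (f w w'' + ab w³ + w w' + ab f w² w' - f w'²)`,
so along a solution of the ODE `r v' = (v - ab r²) r'`, which is `dv/dr = -ab r + v/r`
after dividing by `r r'`.
-/

section

variable {𝕜 : Type*} [NontriviallyNormedField 𝕜] {g : 𝕜 → 𝕜} {x : 𝕜}

theorem hasDerivAt_id_mul (hg : DifferentiableAt 𝕜 g x) :
    HasDerivAt (fun y => y * g y) (g x + x * deriv g x) x := by
  simpa using (hasDerivAt_id x).fun_mul hg.hasDerivAt

theorem hasDerivAt_sq_mul (hg : DifferentiableAt 𝕜 g x) :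
    HasDerivAt (fun y => y ^ 2 * g y) (2 * x * g x + x ^ 2 * deriv g x) x := by
  simpa using (hasDerivAt_pow 2 x).fun_mul hg.hasDerivAt

end

theorem cheng_invariants_identity (a b f w w' w'' : ℝ) :
    f * w * (2 * f * w' + f ^ 2 * w'') - f ^ 2 * w' * (w + f * w')
        + a * b * (f * w) ^ 2 * (w + f * w')
      = f ^ 2 * (f * w * w'' + a * b * w ^ 3 + w * w' + a * b * f * w ^ 2 * w' - f * w' ^ 2) := by
  ring

theorem div_eq_neg_mul_add_div {c r v r' v' : ℝ} (hr' : r' ≠ 0) (hr : r ≠ 0)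
    (h : r * v' - v * r' + c * r ^ 2 * r' = 0) : v' / r' = -c * r + v / r := by
  field_simp
  linear_combination h

theorem cheng_scaling_reduction_euler_general (a b : ℝ)
    (w : ℝ → ℝ) (hw : Differentiable ℝ w) (hw2 : Differentiable ℝ (deriv w))
    (hode : ∀ f : ℝ, 0 < f →
      f * w f * deriv (deriv w) f + a * b * (w f) ^ 3 + w f * deriv w f
        + a * b * f * (w f) ^ 2 * deriv w f - f * (deriv w f) ^ 2 = 0)
    (r v : ℝ → ℝ) (hr : ∀ f, r f = f * w f) (hv : ∀ f, v f = f ^ 2 * deriv w f) :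
    ∀ f : ℝ, 0 < f → deriv r f ≠ 0 → r f ≠ 0 →
      deriv v f / deriv r f = -(a * b) * r f + v f / r f := by
  obtain rfl := funext hr
  obtain rfl := funext hv
  intro f hf hr' hr0
  refine div_eq_neg_mul_add_div hr' hr0 ?_
  rw [(hasDerivAt_id_mul (hw f)).deriv, (hasDerivAt_sq_mul (hw2 f)).deriv,
    cheng_invariants_identity, hode f hf, mul_zero]

/-- Reduction of `f w w'' + ab w³ + w w' + ab f w² w' - f (w')² = 0` via the
differential invariants `r = f w`, `v = f² w'` gives `dv/dr = -ab r + v/r`. -/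
theorem cheng_scaling_reduction_euler (a b : ℝ)
    (w : ℝ → ℝ) (hw : Differentiable ℝ w) (hw2 : Differentiable ℝ (deriv w))
    (hwne : ∀ f : ℝ, 0 < f → w f ≠ 0)
    (hode : ∀ f : ℝ, 0 < f →
      f * w f * deriv (deriv w) f + a * b * (w f) ^ 3 + w f * deriv w f
        + a * b * f * (w f) ^ 2 * deriv w f - f * (deriv w f) ^ 2 = 0)
    (r v : ℝ → ℝ) (hr : ∀ f, r f = f * w f) (hv : ∀ f, v f = f ^ 2 * deriv w f) :
    ∀ f : ℝ, 0 < f → deriv r f ≠ 0 → r f ≠ 0 →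
      deriv v f / deriv r f = -(a * b) * r f + v f / r f :=
  cheng_scaling_reduction_euler_general a b w hw hw2 hode r v hr hv
end
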